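/- Let q : ℝ → ℝ/G be the quotient map modulo the additive subgroup G. Then the image under q of the set ⋃_{s ∈ S} s·G, where S = {0, 1/√3, √3/2, 2/√3, √3}, equals the image under q of the six-element set T = {0, 1/√3, 2/√3, 1/2, √3/2, (1+√3)/2}, and this image has exactly 6 elements; i.e., the elements of T are pairwise incongruent modulo G. -/
import Mathlib

/-- `G = ℤ[√3]` as an additive subgroup of `ℝ`. -/
def Gsub : AddSubgroup ℝ where
  carrier := {r | ∃ a b : ℤ, r = a + b * Real.sqrt 3}
  zero_mem' := ⟨0, 0, by simp⟩
  add_mem' := by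
    rintro x y ⟨a, b, rfl⟩ ⟨c, d, rfl⟩
    exact ⟨a + c, b + d, by push_cast; ring⟩
  neg_mem' := by
    rintro x ⟨a, b, rfl⟩
    exact ⟨-a, -b, by push_cast; ring⟩

/-- The quotient map `ℝ → ℝ/G`. -/
def q : ℝ →+ ℝ ⧸ Gsub := QuotientAddGroup.mk' Gsub

/-- The union `⋃_{s ∈ S} s·G` for `S = {0, 1/√3, √3/2, 2/√3, √3}`. -/
noncomputable def U : Set ℝ :=
  ⋃ s ∈ ({0, 1 / Real.sqrt 3, Real.sqrt 3 / 2, 2 / Real.sqrt 3, Real.sqrt 3} : Set ℝ),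
    {r : ℝ | ∃ g ∈ Gsub, r = s * g}

/-- The six-element set `T`. -/
noncomputable def T : Set ℝ :=
  {0, 1 / Real.sqrt 3, 2 / Real.sqrt 3, 1 / 2, Real.sqrt 3 / 2, (1 + Real.sqrt 3) / 2}

/- ### Auxiliary material -/

private lemma s3 : Real.sqrt 3 * Real.sqrt 3 = 3 := Real.mul_self_sqrt (by norm_num)
private lemma s3ne : Real.sqrt 3 ≠ 0 := by positivity

/-- Canonical form `m/6 + (n/6)√3`. -/
noncomputable def c (m n : ℤ) : ℝ := m / 6 + n / 6 * Real.sqrt 3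

private lemma key6 {m n a b : ℤ} (h : (m:ℝ)/6 + (n:ℝ)/6 * Real.sqrt 3 = a + b * Real.sqrt 3) :
    m = 6*a ∧ n = 6*b := by
  by_cases hn : n = 6*b
  · subst hn
    have : (m:ℝ) = 6*a := by push_cast at h ⊢; linarith
    exact ⟨by exact_mod_cast this, rfl⟩
  · exfalso
    apply Nat.prime_three.irrational_sqrt
    refine ⟨(6*a - m : ℤ)/((n : ℚ) - 6*b), ?_⟩
    have hne : ((n:ℝ) - 6*b) ≠ 0 := by
      intro h'; apply hn; have : (n:ℝ) = 6*b := by linarith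
      exact_mod_cast this
    push_cast
    rw [div_eq_iff hne]
    linarith

private lemma mem_c_iff (m n : ℤ) : c m n ∈ Gsub ↔ 6 ∣ m ∧ 6 ∣ n := by
  constructor
  · rintro ⟨a, b, hab⟩
    obtain ⟨h1, h2⟩ := key6 hab
    exact ⟨⟨a, h1⟩, ⟨b, h2⟩⟩
  · rintro ⟨⟨a, rfl⟩, ⟨b, rfl⟩⟩
    exact ⟨a, b, by unfold c; push_cast; ring⟩

private lemma qeq_iff (m n m' n' : ℤ) :
    q (c m n) = q (c m' n') ↔ 6 ∣ (m - m') ∧ 6 ∣ (n - n') := by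
  rw [show q (c m n) = q (c m' n') ↔ c m n - c m' n' ∈ Gsub from
    QuotientAddGroup.eq_iff_sub_mem, show c m n - c m' n' = c (m - m') (n - n') by
      unfold c; push_cast; ring, mem_c_iff]

private lemma qne (m n m' n' : ℤ) (h : ¬(6 ∣ (m - m') ∧ 6 ∣ (n - n'))) :
    q (c m n) ≠ q (c m' n') := fun he => h ((qeq_iff m n m' n').mp he)

-- canonical forms of the elements of T
private lemma e0 : (0:ℝ) = c 0 0 := by unfold c; push_cast; ring
private lemma e1 : 1 / Real.sqrt 3 = c 0 2 := by
  unfold c; push_cast; field_simp; linear_combination (-2) * s3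
private lemma e2 : 2 / Real.sqrt 3 = c 0 4 := by
  unfold c; push_cast; field_simp; linear_combination (-4) * s3
private lemma e3 : (1:ℝ) / 2 = c 3 0 := by unfold c; push_cast; ring
private lemma e4 : Real.sqrt 3 / 2 = c 0 3 := by unfold c; push_cast; ring
private lemma e5 : (1 + Real.sqrt 3) / 2 = c 3 3 := by unfold c; push_cast; ring

-- canonical forms of the generators of U
private lemma f1 (a b : ℤ) :
    (1 / Real.sqrt 3) * ((a:ℝ) + b * Real.sqrt 3) = c (6*b) (2*a) := by
  unfold c; push_cast; field_simp; linear_combination (-2*(a:ℝ)) * s3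
private lemma f2 (a b : ℤ) :
    (Real.sqrt 3 / 2) * ((a:ℝ) + b * Real.sqrt 3) = c (9*b) (3*a) := by
  unfold c; push_cast; field_simp; linear_combination (6*(b:ℝ)) * s3
private lemma f3 (a b : ℤ) :
    (2 / Real.sqrt 3) * ((a:ℝ) + b * Real.sqrt 3) = c (12*b) (4*a) := by
  unfold c; push_cast; field_simp; linear_combination (-4*(a:ℝ)) * s3
private lemma f4 (a b : ℤ) :
    Real.sqrt 3 * ((a:ℝ) + b * Real.sqrt 3) = c (18*b) (6*a) := by
  unfold c; push_cast; field_simp; linear_combination (6*(b:ℝ)) * s3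

private lemma memT0 : (0:ℝ) ∈ T := by simp [T]
private lemma memT1 : 1 / Real.sqrt 3 ∈ T := by simp [T]
private lemma memT2 : 2 / Real.sqrt 3 ∈ T := by simp [T]
private lemma memT3 : (1:ℝ) / 2 ∈ T := by simp [T]
private lemma memT4 : Real.sqrt 3 / 2 ∈ T := by simp [T]
private lemma memT5 : (1 + Real.sqrt 3) / 2 ∈ T := by simp [T]

private lemma memU (s x : ℝ)
    (hs : s ∈ ({0, 1 / Real.sqrt 3, Real.sqrt 3 / 2, 2 / Real.sqrt 3, Real.sqrt 3} : Set ℝ))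
    (hx : ∃ g ∈ Gsub, x = s * g) : x ∈ U := by
  simp only [U, Set.mem_iUnion]
  exact ⟨s, hs, hx⟩

theorem stmt18 : q '' U = q '' T ∧ (q '' T).ncard = 6 := by
  constructor
  · apply Set.Subset.antisymm
    · rintro y ⟨x, hx, rfl⟩
      simp only [U, Set.mem_iUnion, Set.mem_setOf_eq, exists_prop,
        Set.mem_insert_iff, Set.mem_singleton_iff] at hx
      obtain ⟨s, hs, g, ⟨a, b, rfl⟩, rfl⟩ := hx
      rcases hs with rfl | rfl | rfl | rfl | rfl
      · exact ⟨0, memT0, by rw [zero_mul]⟩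
      · rw [f1]
        rcases (show a % 3 = 0 ∨ a % 3 = 1 ∨ a % 3 = 2 by omega) with h | h | h
        · exact ⟨0, memT0, by rw [e0]; exact (qeq_iff _ _ _ _).mpr ⟨by omega, by omega⟩⟩
        · exact ⟨1 / Real.sqrt 3, memT1,
            by rw [e1]; exact (qeq_iff _ _ _ _).mpr ⟨by omega, by omega⟩⟩
        · exact ⟨2 / Real.sqrt 3, memT2,
            by rw [e2]; exact (qeq_iff _ _ _ _).mpr ⟨by omega, by omega⟩⟩
      · rw [f2]
        rcases (show b % 2 = 0 ∨ b % 2 = 1 by omega) with hb | hb <;>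
          rcases (show a % 2 = 0 ∨ a % 2 = 1 by omega) with ha | ha
        · exact ⟨0, memT0, by rw [e0]; exact (qeq_iff _ _ _ _).mpr ⟨by omega, by omega⟩⟩
        · exact ⟨Real.sqrt 3 / 2, memT4,
            by rw [e4]; exact (qeq_iff _ _ _ _).mpr ⟨by omega, by omega⟩⟩
        · exact ⟨(1:ℝ) / 2, memT3,
            by rw [e3]; exact (qeq_iff _ _ _ _).mpr ⟨by omega, by omega⟩⟩
        · exact ⟨(1 + Real.sqrt 3) / 2, memT5,
            by rw [e5]; exact (qeq_iff _ _ _ _).mpr ⟨by omega, by omega⟩⟩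
      · rw [f3]
        rcases (show a % 3 = 0 ∨ a % 3 = 1 ∨ a % 3 = 2 by omega) with h | h | h
        · exact ⟨0, memT0, by rw [e0]; exact (qeq_iff _ _ _ _).mpr ⟨by omega, by omega⟩⟩
        · exact ⟨2 / Real.sqrt 3, memT2,
            by rw [e2]; exact (qeq_iff _ _ _ _).mpr ⟨by omega, by omega⟩⟩
        · exact ⟨1 / Real.sqrt 3, memT1,
            by rw [e1]; exact (qeq_iff _ _ _ _).mpr ⟨by omega, by omega⟩⟩
      · rw [f4]
        exact ⟨0, memT0, by rw [e0]; exact (qeq_iff _ _ _ _).mpr ⟨by omega, by omega⟩⟩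
    · rintro y ⟨t, ht, rfl⟩
      simp only [T, Set.mem_insert_iff, Set.mem_singleton_iff] at ht
      rcases ht with rfl | rfl | rfl | rfl | rfl | rfl
      · exact ⟨0 * (((0:ℤ):ℝ) + ((0:ℤ):ℝ) * Real.sqrt 3),
          memU _ _ (by simp) ⟨_, ⟨0, 0, rfl⟩, rfl⟩, by norm_num⟩
      · exact ⟨(1 / Real.sqrt 3) * (((1:ℤ):ℝ) + ((0:ℤ):ℝ) * Real.sqrt 3),
          memU _ _ (by simp) ⟨_, ⟨1, 0, rfl⟩, rfl⟩,
          by rw [f1, e1]; exact (qeq_iff _ _ _ _).mpr ⟨by omega, by omega⟩⟩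
      · exact ⟨(2 / Real.sqrt 3) * (((1:ℤ):ℝ) + ((0:ℤ):ℝ) * Real.sqrt 3),
          memU _ _ (by simp) ⟨_, ⟨1, 0, rfl⟩, rfl⟩,
          by rw [f3, e2]; exact (qeq_iff _ _ _ _).mpr ⟨by omega, by omega⟩⟩
      · exact ⟨(Real.sqrt 3 / 2) * (((0:ℤ):ℝ) + ((1:ℤ):ℝ) * Real.sqrt 3),
          memU _ _ (by simp) ⟨_, ⟨0, 1, rfl⟩, rfl⟩,
          by rw [f2, e3]; exact (qeq_iff _ _ _ _).mpr ⟨by omega, by omega⟩⟩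
      · exact ⟨(Real.sqrt 3 / 2) * (((1:ℤ):ℝ) + ((0:ℤ):ℝ) * Real.sqrt 3),
          memU _ _ (by simp) ⟨_, ⟨1, 0, rfl⟩, rfl⟩,
          by rw [f2, e4]; exact (qeq_iff _ _ _ _).mpr ⟨by omega, by omega⟩⟩
      · exact ⟨(Real.sqrt 3 / 2) * (((1:ℤ):ℝ) + ((1:ℤ):ℝ) * Real.sqrt 3),
          memU _ _ (by simp) ⟨_, ⟨1, 1, rfl⟩, rfl⟩,
          by rw [f2, e5]; exact (qeq_iff _ _ _ _).mpr ⟨by omega, by omega⟩⟩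
  · have hT : q '' T = {q (c 0 0), q (c 0 2), q (c 0 4), q (c 3 0), q (c 0 3), q (c 3 3)} := by
      rw [show T = {c 0 0, c 0 2, c 0 4, c 3 0, c 0 3, c 3 3} by
        rw [T, ← e0, ← e1, ← e2, ← e3, ← e4, ← e5]]
      simp [Set.image_insert_eq]
    rw [hT]
    rw [Set.ncard_insert_of_notMem (by
        simp only [Set.mem_insert_iff, Set.mem_singleton_iff]
        push_neg
        exact ⟨qne _ _ _ _ (by omega), qne _ _ _ _ (by omega), qne _ _ _ _ (by omega),
          qne _ _ _ _ (by omega), qne _ _ _ _ (by omega)⟩)]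
    rw [Set.ncard_insert_of_notMem (by
        simp only [Set.mem_insert_iff, Set.mem_singleton_iff]
        push_neg
        exact ⟨qne _ _ _ _ (by omega), qne _ _ _ _ (by omega),
          qne _ _ _ _ (by omega), qne _ _ _ _ (by omega)⟩)]
    rw [Set.ncard_insert_of_notMem (by
        simp only [Set.mem_insert_iff, Set.mem_singleton_iff]
        push_neg
        exact ⟨qne _ _ _ _ (by omega), qne _ _ _ _ (by omega), qne _ _ _ _ (by omega)⟩)]
    rw [Set.ncard_insert_of_notMem (by
        simp only [Set.mem_insert_iff, Set.mem_singleton_iff]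
        push_neg
        exact ⟨qne _ _ _ _ (by omega), qne _ _ _ _ (by omega)⟩)]
    rw [Set.ncard_insert_of_notMem (by
        simp only [Set.mem_singleton_iff]
        exact qne _ _ _ _ (by omega))]
    rw [Set.ncard_singleton]
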